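/- arXiv:1504.05324 — 2 statements merged into one kernel-verified Lean document; each statement's English description precedes it below -/
import Mathlib

section
/- Let V be a finite-dimensional real normed space and let v_1, …, v_k be pairwise distinct ℓ∞-directions (no two equal up to sign) with corresponding subspaces U_1, …, U_k. Then V is the algebraic direct sum V = span{v_1} ⊕ span{v_2} ⊕ … ⊕ span{v_k} ⊕ (U_1 ∩ … ∩ U_k), and for all λ_1, …, λ_k ∈ ℝ and u ∈ U_1 ∩ … ∩ U_k one has ‖∑_{i=1}^k λ_i v_i + u‖ = max(|λ_1|, …, |λ_k|, ‖u‖). -/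
/-- `v` is an ℓ∞-direction of `V` with corresponding subspace `U`: `v` is a unit
vector, `V = span{v} ⊕ U` (algebraic direct sum), and
`‖α • v + u‖ = max |α| ‖u‖` for all `α : ℝ` and `u ∈ U`. -/
def IsLinftyDirection {V : Type*} [NormedAddCommGroup V] [NormedSpace ℝ V]
    (v : V) (U : Submodule ℝ V) : Prop :=
  ‖v‖ = 1 ∧ IsCompl (Submodule.span ℝ {v}) U ∧
    ∀ (α : ℝ), ∀ u ∈ U, ‖α • v + u‖ = max |α| ‖u‖

/-!
Let `v ≠ ±w` be ℓ∞-directions and write `w = α • v + u`, `v = β • w + z` along the two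
decompositions. Computing `‖w + t • v‖` both ways gives
`max |α + t| ‖u‖ = max |1 + t * β| (|t| * ‖z‖)` for every real `t`; large `t` force `α = 0` or
`α = β = ±1`, and in the latter case `z = -α • u` and `t = -α * (1 + ‖u‖)` force `u = 0`,
i.e. `w = ±v`. Hence `v j ∈ U i` whenever `i ≠ j`, and splitting off one direction at a time shows
that `(c, u) ↦ ∑ i, c i • v i + u` is a linear isometry of `ℓ∞(ι) × ⨅ i, U i` onto `V`.
-/

theorem pi_norm_eq_iSup_abs {ι : Type*} [Fintype ι] (c : ι → ℝ) : ‖c‖ = ⨆ i, |c i| := by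
  rw [Pi.norm_def, Finset.sup_univ_eq_ciSup, NNReal.coe_iSup]
  simp only [coe_nnnorm, Real.norm_eq_abs]

theorem eq_zero_or_eq_of_forall_max_eq {α β a b : ℝ} (hα : max |α| a = 1) (hβ : max |β| b = 1)
    (h : ∀ t, max |α + t| a = max |1 + t * β| (|t| * b)) : α = 0 ∨ α = β ∧ |α| = 1 := by
  have hα1 : |α| ≤ 1 := hα ▸ le_max_left _ _
  have ha1 : a ≤ 1 := hα ▸ le_max_right _ _
  have hb1 : b ≤ 1 := hβ ▸ le_max_right _ _
  rcases (hβ ▸ le_max_left _ _ : |β| ≤ 1).lt_or_eq with hβ1 | hβ1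
  · left
    have hb : b = 1 := by rcases max_choice |β| b with h' | h' <;> rw [h'] at hβ <;> linarith
    -- `T` is large enough that `a ≤ |α + T|` and `|1 + T * β| ≤ T`.
    set T := 2 / (1 - |β|)
    have hTβ : T * (1 - |β|) = 2 := div_mul_cancel₀ _ (by linarith)
    have hT2 : 2 ≤ T := by nlinarith [abs_nonneg β]
    have hlhs : max |α + T| a = α + T := by
      rw [abs_of_nonneg (by linarith [neg_abs_le α])]
      exact max_eq_left (by linarith [neg_abs_le α])
    have hrhs : max |1 + T * β| (|T| * b) = T := by
      have : |1 + T * β| ≤ T := (abs_add_le _ _).trans (by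
        rw [abs_one, abs_mul, abs_of_nonneg (by linarith : 0 ≤ T)]; nlinarith)
      rw [hb, mul_one, abs_of_nonneg (by linarith : 0 ≤ T)]
      exact max_eq_right this
    have hTeq := h T
    rw [hlhs, hrhs] at hTeq
    linarith
  · right
    have hββ : β * β = 1 := by nlinarith [sq_abs β]
    have hmax : max |α + 2 * β| a = 3 := by
      rw [h (2 * β), show 1 + 2 * β * β = 3 by linarith, abs_mul, hβ1, abs_two,
        abs_of_pos three_pos]
      exact max_eq_left (by linarith)
    have h3 : |α + 2 * β| = 3 := by
      rcases max_choice |α + 2 * β| a with h' | h' <;> rw [h'] at hmax <;> linarith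
    have hαβ : α = β := by
      rcases abs_eq zero_le_one |>.1 hβ1 with rfl | rfl <;>
        rcases abs_eq (by norm_num : (0 : ℝ) ≤ 3) |>.1 h3 with h'' | h'' <;>
        linarith [le_abs_self α, neg_abs_le α]
    exact ⟨hαβ, hαβ ▸ hβ1⟩

namespace IsLinftyDirection

variable {V : Type*} [NormedAddCommGroup V] [NormedSpace ℝ V] {v w : V} {U W : Submodule ℝ V}

theorem norm_smul_add (h : IsLinftyDirection v U) (α : ℝ) {u : V} (hu : u ∈ U) :
    ‖α • v + u‖ = max |α| ‖u‖ :=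
  h.2.2 α u hu

theorem exists_eq_smul_add (h : IsLinftyDirection v U) (x : V) :
    ∃ α : ℝ, ∃ u ∈ U, x = α • v + u := by
  have hx : x ∈ Submodule.span ℝ {v} ⊔ U := h.2.1.sup_eq_top ▸ Submodule.mem_top
  obtain ⟨y, hy, u, hu, rfl⟩ := Submodule.mem_sup.1 hx
  obtain ⟨α, rfl⟩ := Submodule.mem_span_singleton.1 hy
  exact ⟨α, u, hu, rfl⟩

theorem max_abs_add_eq (hv : IsLinftyDirection v U) (hw : IsLinftyDirection w W)
    {α β : ℝ} {u z : V} (hu : u ∈ U) (hz : z ∈ W) (hwv : w = α • v + u) (hvw : v = β • w + z)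
    (t : ℝ) : max |α + t| ‖u‖ = max |1 + t * β| (|t| * ‖z‖) := by
  have h₁ : w + t • v = (α + t) • v + u := by rw [hwv]; module
  have h₂ : w + t • v = (1 + t * β) • w + t • z := by rw [hvw]; module
  rw [← hv.norm_smul_add _ hu, ← h₁, h₂, hw.norm_smul_add _ (W.smul_mem t hz), norm_smul,
    Real.norm_eq_abs]

theorem mem_of_ne_of_ne_neg (hv : IsLinftyDirection v U) (hw : IsLinftyDirection w W)
    (hne : w ≠ v) (hne' : w ≠ -v) : w ∈ U := by
  obtain ⟨α, u, hu, hwv⟩ := hv.exists_eq_smul_add w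
  obtain ⟨β, z, hz, hvw⟩ := hw.exists_eq_smul_add v
  have hα : max |α| ‖u‖ = 1 := by rw [← hv.norm_smul_add α hu, ← hwv, hw.1]
  have hβ : max |β| ‖z‖ = 1 := by rw [← hw.norm_smul_add β hz, ← hvw, hv.1]
  have key := hv.max_abs_add_eq hw hu hz hwv hvw
  rcases eq_zero_or_eq_of_forall_max_eq hα hβ key with rfl | ⟨rfl, hα1⟩
  · simpa [hwv] using hu
  have hαα : α * α = 1 := by nlinarith [sq_abs α]
  have hz : z = -α • u := by
    rw [hwv] at hvw
    linear_combination (norm := module) -hvw - hαα • v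
  have hza : ‖z‖ = ‖u‖ := by rw [hz, norm_smul, norm_neg, Real.norm_eq_abs, hα1, one_mul]
  have hle : (1 + ‖u‖) * ‖u‖ ≤ ‖u‖ :=
    calc (1 + ‖u‖) * ‖u‖ = |-α * (1 + ‖u‖)| * ‖z‖ := by
          rw [hza, abs_mul, abs_neg, hα1, one_mul, abs_of_nonneg (by positivity)]
      _ ≤ max |1 + -α * (1 + ‖u‖) * α| (|-α * (1 + ‖u‖)| * ‖z‖) := le_max_right _ _
      _ = max |α + -α * (1 + ‖u‖)| ‖u‖ := (key _).symm
      _ = ‖u‖ := by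
          rw [show α + -α * (1 + ‖u‖) = -α * ‖u‖ by ring, abs_mul, abs_neg, hα1, one_mul,
            abs_norm, max_self]
  have hu0 : u = 0 := norm_eq_zero.1 (by nlinarith [norm_nonneg u])
  rcases abs_eq zero_le_one |>.1 hα1 with rfl | rfl <;> simp [hwv, hu0] at hne hne'

section Family

variable {ι : Type*} {v : ι → V} {U : ι → Submodule ℝ V}

theorem nnnorm_sum_smul_add (hdir : ∀ i, IsLinftyDirection (v i) (U i))
    (hmem : Pairwise fun i j ↦ v j ∈ U i) (s : Finset ι) (c : ι → ℝ) {u : V}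
    (hu : ∀ i ∈ s, u ∈ U i) :
    ‖∑ i ∈ s, c i • v i + u‖₊ = s.sup (fun i ↦ ‖c i‖₊) ⊔ ‖u‖₊ := by
  classical
  induction s using Finset.induction_on with
  | empty => simp
  | insert a s ha ih =>
    have hrest : ∑ i ∈ s, c i • v i + u ∈ U a :=
      add_mem (Submodule.sum_mem _ fun i hi ↦ Submodule.smul_mem _ _
        (hmem (ne_of_mem_of_not_mem hi ha).symm)) (hu a (Finset.mem_insert_self a s))
    rw [Finset.sum_insert ha, add_assoc, Finset.sup_insert, sup_assoc,
      ← ih fun i hi ↦ hu i (Finset.mem_insert_of_mem hi)]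
    ext
    simpa [Real.norm_eq_abs] using (hdir a).norm_smul_add (c a) hrest

theorem norm_sum_smul_add [Fintype ι] (hdir : ∀ i, IsLinftyDirection (v i) (U i))
    (hmem : Pairwise fun i j ↦ v j ∈ U i) (c : ι → ℝ) {u : V} (hu : u ∈ ⨅ i, U i) :
    ‖∑ i, c i • v i + u‖ = max ‖c‖ ‖u‖ := by
  have := congrArg NNReal.toReal <| nnnorm_sum_smul_add hdir hmem Finset.univ c
    fun i _ ↦ Submodule.mem_iInf _ |>.1 hu i
  simpa [Pi.norm_def] using this

theorem exists_eq_sum_smul_add (hdir : ∀ i, IsLinftyDirection (v i) (U i))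
    (hmem : Pairwise fun i j ↦ v j ∈ U i) (s : Finset ι) (x : V) :
    ∃ c : ι → ℝ, ∃ u : V, (∀ i ∈ s, u ∈ U i) ∧ x = ∑ i ∈ s, c i • v i + u := by
  classical
  induction s using Finset.induction_on with
  | empty => exact ⟨0, x, by simp, by simp⟩
  | insert a s ha ih =>
    obtain ⟨c, u, hu, rfl⟩ := ih
    obtain ⟨μ, u', hu', rfl⟩ := (hdir a).exists_eq_smul_add u
    refine ⟨Function.update c a μ, u', fun i hi ↦ ?_, ?_⟩
    · rcases Finset.mem_insert.1 hi with rfl | hi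
      · exact hu'
      · have hvi : v a ∈ U i := hmem (ne_of_mem_of_not_mem hi ha)
        simpa using sub_mem (hu i hi) (Submodule.smul_mem _ μ hvi)
    · have hs : ∑ i ∈ s, Function.update c a μ i • v i = ∑ i ∈ s, c i • v i :=
        Finset.sum_congr rfl fun i hi ↦ by
          rw [Function.update_of_ne (ne_of_mem_of_not_mem hi ha)]
      rw [Finset.sum_insert ha, Function.update_self, hs]
      abel

noncomputable def linearIsometryEquiv [Fintype ι] (hdir : ∀ i, IsLinftyDirection (v i) (U i))
    (hmem : Pairwise fun i j ↦ v j ∈ U i) : (ι → ℝ) × ↥(⨅ i, U i) ≃ₗᵢ[ℝ] V :=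
  .ofSurjective
    { toLinearMap := (Fintype.linearCombination ℝ v).coprod (⨅ i, U i).subtype
      norm_map' := fun p ↦ by
        simpa [Fintype.linearCombination_apply, Prod.norm_def] using
          norm_sum_smul_add hdir hmem p.1 p.2.2 }
    fun x ↦ by
      obtain ⟨c, u, hu, rfl⟩ := exists_eq_sum_smul_add hdir hmem Finset.univ x
      exact ⟨(c, ⟨u, Submodule.mem_iInf _ |>.2 fun i ↦ hu i (Finset.mem_univ i)⟩), rfl⟩

theorem linearIsometryEquiv_apply [Fintype ι] (hdir : ∀ i, IsLinftyDirection (v i) (U i))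
    (hmem : Pairwise fun i j ↦ v j ∈ U i) (p : (ι → ℝ) × ↥(⨅ i, U i)) :
    linearIsometryEquiv hdir hmem p = ∑ i, p.1 i • v i + p.2 :=
  rfl

end Family

end IsLinftyDirection

theorem linftyDirections_combine_general
    {V : Type*} [NormedAddCommGroup V] [NormedSpace ℝ V]
    (k : ℕ) (v : Fin k → V) (U : Fin k → Submodule ℝ V)
    (hdir : ∀ i, IsLinftyDirection (v i) (U i))
    (hdist : ∀ i j, i ≠ j → v i ≠ v j ∧ v i ≠ -v j) :
    (∀ x : V, ∃! p : (Fin k → ℝ) × ↥(⨅ i, U i),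
        x = (∑ i, p.1 i • v i) + (p.2 : V)) ∧
    (∀ (lam : Fin k → ℝ), ∀ u ∈ ⨅ i, U i,
        ‖(∑ i, lam i • v i) + u‖ = max (⨆ i, |lam i|) ‖u‖) := by
  have hmem : Pairwise fun i j ↦ v j ∈ U i := fun i j hij ↦
    (hdir i).mem_of_ne_of_ne_neg (hdir j) (hdist j i hij.symm).1 (hdist j i hij.symm).2
  refine ⟨fun x ↦ ?_, fun lam u hu ↦ ?_⟩
  · simpa only [eq_comm, IsLinftyDirection.linearIsometryEquiv_apply] using
      (IsLinftyDirection.linearIsometryEquiv hdir hmem).bijective.existsUnique x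
  · rw [IsLinftyDirection.norm_sum_smul_add hdir hmem lam hu, pi_norm_eq_iSup_abs]

/-- Pairwise distinct ℓ∞-directions `v₁, …, v_k` with corresponding
subspaces `U₁, …, U_k` combine to give a direct-sum decomposition
`V = span{v₁} ⊕ ⋯ ⊕ span{v_k} ⊕ (U₁ ∩ ⋯ ∩ U_k)` (every vector has a unique
representation), and the norm is the maximum:
`‖∑ λᵢ • vᵢ + u‖ = max (maxᵢ |λᵢ|) ‖u‖` for all `λ` and `u ∈ ⋂ Uᵢ`. -/
theorem linftyDirections_combine
    {V : Type*} [NormedAddCommGroup V] [NormedSpace ℝ V] [FiniteDimensional ℝ V]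
    (k : ℕ) (v : Fin k → V) (U : Fin k → Submodule ℝ V)
    (hdir : ∀ i, IsLinftyDirection (v i) (U i))
    (hdist : ∀ i j, i ≠ j → v i ≠ v j ∧ v i ≠ -v j) :
    (∀ x : V, ∃! p : (Fin k → ℝ) × ↥(⨅ i, U i),
        x = (∑ i, p.1 i • v i) + (p.2 : V)) ∧
    (∀ (lam : Fin k → ℝ), ∀ u ∈ ⨅ i, U i,
        ‖(∑ i, lam i • v i) + u‖ = max (⨆ i, |lam i|) ‖u‖) :=
  linftyDirections_combine_general k v U hdir hdist
end

section
/- Let V be a finite-dimensional real normed space, let f : V → V be a step-isometry with f(0) = 0, let x be an extreme point of the closed unit ball B(0,1), and let n ∈ ℕ. Then f(nx) = n·f(x). -/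
/-!
A step-isometry preserves integral distances exactly: surjectivity rules out stretching a
distance `m ∈ ℕ` into `(m, m + 1)`. Hence `w = f (n • x)` has norm `n`, and for `g = f⁻¹` the point
`g (w / n)` lies at distance `1` from `0` and `n - 1` from `n • x`. As `x` is an extreme point of the
unit ball, this forces `g (w / n) = x`, that is `f x = w / n`.
-/

/-- A step-isometry of a normed space: a bijection preserving the integer part of
all distances. -/
def IsStepIsometry {V : Type*} [NormedAddCommGroup V] (f : V → V) : Prop :=
  Function.Bijective f ∧ ∀ x y : V, ⌊‖x - y‖⌋ = ⌊‖f x - f y‖⌋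

open Metric

namespace IsStepIsometry

variable {V : Type*} [NormedAddCommGroup V] {f : V → V}

lemma floor_dist_eq (hf : IsStepIsometry f) (x y : V) : ⌊dist (f x) (f y)⌋ = ⌊dist x y⌋ := by
  simpa only [dist_eq_norm] using (hf.2 x y).symm

lemma symm (hf : IsStepIsometry f) : IsStepIsometry (Equiv.ofBijective f hf.1).symm := by
  refine ⟨Equiv.bijective _, fun x y => ?_⟩
  simpa only [Equiv.ofBijective_apply_symm_apply] using
    (hf.2 ((Equiv.ofBijective f hf.1).symm x) ((Equiv.ofBijective f hf.1).symm y)).symm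

/-- If `f` stretched a distance `m ∈ ℕ` to some `b ∈ (m, m + 1)`, the preimage of the point at
distance `m + 1` from `f v` on the ray through `f u` would be at distance `≥ m + 1` from `v` but
`< 1` from `u`. -/
lemma dist_eq_natCast [NormedSpace ℝ V] (hf : IsStepIsometry f) {u v : V} {m : ℕ}
    (h : dist u v = m) : dist (f u) (f v) = m := by
  set b := dist (f u) (f v)
  have hb : ⌊b⌋ = m := by rw [hf.floor_dist_eq, h, Int.floor_natCast]
  have hmb : (m : ℝ) ≤ b := by exact_mod_cast Int.le_floor.mp hb.ge
  have hbm : b < m + 1 := by exact_mod_cast Int.floor_eq_iff.mp hb |>.2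
  refine le_antisymm ?_ hmb
  by_contra! hlt
  have hb0 : 0 < b := (Nat.cast_nonneg m).trans_lt hlt
  obtain ⟨r, hr⟩ := hf.1.2 (AffineMap.lineMap (f v) (f u) ((m + 1) / b))
  have hrv : ⌊dist r v⌋ = m + 1 := by
    rw [← hf.floor_dist_eq, hr, dist_lineMap_left, dist_comm, Real.norm_of_nonneg (by positivity),
      div_mul_cancel₀ _ hb0.ne']
    exact_mod_cast Int.floor_natCast (m + 1)
  have hru : ⌊dist r u⌋ = 0 := by
    rw [← hf.floor_dist_eq, hr, dist_lineMap_right, dist_comm (f v), Real.norm_of_nonpos, neg_sub,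
      sub_mul, div_mul_cancel₀ _ hb0.ne', one_mul, Int.floor_eq_zero_iff]
    · constructor <;> linarith
    · rw [sub_nonpos, le_div_iff₀ hb0]; linarith
  have h1 : (m : ℝ) + 1 ≤ dist r v := by exact_mod_cast Int.le_floor.mp hrv.ge
  have h2 : dist r u < 1 := by simpa using Int.floor_eq_zero_iff.mp hru |>.2
  linarith [dist_triangle r u v]

lemma norm_eq_natCast [NormedSpace ℝ V] (hf : IsStepIsometry f) (h0 : f 0 = 0) {u : V} {m : ℕ}
    (h : ‖u‖ = m) : ‖f u‖ = m := by
  simpa only [dist_zero_right, h0] using hf.dist_eq_natCast (v := 0) (by simpa using h)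

end IsStepIsometry

/-- For `t > 1`, `x` is the convex combination `t⁻¹ • y + (1 - t⁻¹) • z` with
`z = (t - 1)⁻¹ • (t • x - y)`, and both `y` and `z` lie in the unit ball. -/
lemma eq_of_mem_extremePoints_closedBall {V : Type*} [NormedAddCommGroup V] [NormedSpace ℝ V]
    {x y : V} (hx : x ∈ Set.extremePoints ℝ (closedBall (0 : V) 1)) (hy : ‖y‖ ≤ 1)
    {t : ℝ} (ht : 1 ≤ t) (hxy : ‖t • x - y‖ ≤ t - 1) : y = x := by
  obtain rfl | ht := ht.eq_or_lt
  · rw [sub_self, norm_le_zero_iff, one_smul, sub_eq_zero] at hxy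
    exact hxy.symm
  have ht0 : 0 < t := one_pos.trans ht
  have ht1 : 0 < t - 1 := sub_pos.mpr ht
  refine hx.2 (mem_closedBall_zero_iff.mpr hy) (x₂ := (t - 1)⁻¹ • (t • x - y)) ?_ ?_
  · rw [mem_closedBall_zero_iff, norm_smul, Real.norm_of_nonneg (inv_nonneg.mpr ht1.le)]
    exact inv_mul_le_one_of_le₀ hxy ht1.le
  · refine ⟨t⁻¹, 1 - t⁻¹, inv_pos.mpr ht0, sub_pos.mpr (inv_lt_one_of_one_lt₀ ht), by ring, ?_⟩
    have : (1 - t⁻¹) * (t - 1)⁻¹ = t⁻¹ := by field_simp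
    rw [smul_smul, this, smul_sub, smul_smul, inv_mul_cancel₀ ht0.ne', one_smul]
    abel

theorem stepIsometry_smul_extremePoint_general
    {V : Type*} [NormedAddCommGroup V] [NormedSpace ℝ V]
    (f : V → V) (hf : IsStepIsometry f) (h0 : f 0 = 0)
    (x : V) (hx : x ∈ Set.extremePoints ℝ (Metric.closedBall (0 : V) 1))
    (n : ℕ) :
    f ((n : ℝ) • x) = (n : ℝ) • f x := by
  nontriviality V
  obtain rfl | hn := n.eq_zero_or_pos
  · simp [h0]
  set e := Equiv.ofBijective f hf.1
  have hx1 : ‖x‖ = 1 := by simpa using extremePoints_closedBall_subset_sphere hx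
  have hw : ‖f ((n : ℝ) • x)‖ = n := hf.norm_eq_natCast h0 (by simp [norm_smul, hx1])
  set s := (n : ℝ)⁻¹ • f ((n : ℝ) • x)
  have hs : ‖s‖ = (1 : ℕ) := by
    rw [norm_smul, hw, norm_inv, Real.norm_natCast, inv_mul_cancel₀ (by positivity), Nat.cast_one]
  have hws : dist (f ((n : ℝ) • x)) s = (n - 1 : ℕ) := by
    have hn1 : (n : ℝ)⁻¹ ≤ 1 := inv_le_one_of_one_le₀ (by exact_mod_cast hn)
    have : f ((n : ℝ) • x) - s = (1 - (n : ℝ)⁻¹) • f ((n : ℝ) • x) := by rw [sub_smul, one_smul]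
    rw [dist_eq_norm, this, norm_smul, Real.norm_of_nonneg (sub_nonneg.mpr hn1), hw,
      Nat.cast_sub hn, Nat.cast_one, sub_mul, one_mul, inv_mul_cancel₀ (by positivity)]
  have hes : ‖e.symm s‖ = 1 := by
    simpa using hf.symm.norm_eq_natCast (e.symm_apply_eq.mpr h0.symm) hs
  have hxes : dist ((n : ℝ) • x) (e.symm s) = (n - 1 : ℕ) := by
    simpa [e] using hf.symm.dist_eq_natCast hws
  have hfx : f x = s := by
    refine (e.symm_apply_eq.mp ?_).symm
    refine eq_of_mem_extremePoints_closedBall hx hes.le (t := n) (by exact_mod_cast hn) ?_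
    rw [← dist_eq_norm, hxes, Nat.cast_sub hn, Nat.cast_one]
  rw [hfx, smul_inv_smul₀ (by positivity)]

/-- If `f` is a step-isometry of a finite-dimensional real
normed space with `f 0 = 0` and `x` is an extreme point of the closed unit ball,
then `f (n • x) = n • f x` for every natural number `n`. -/
theorem stepIsometry_smul_extremePoint
    {V : Type*} [NormedAddCommGroup V] [NormedSpace ℝ V] [FiniteDimensional ℝ V]
    (f : V → V) (hf : IsStepIsometry f) (h0 : f 0 = 0)
    (x : V) (hx : x ∈ Set.extremePoints ℝ (Metric.closedBall (0 : V) 1))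
    (n : ℕ) :
    f ((n : ℝ) • x) = (n : ℝ) • f x :=
  stepIsometry_smul_extremePoint_general f hf h0 x hx n
end
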